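/- The full elastic energy Ψ_el(J, I₁) = (K/4)(J² − 1 − 2 ln J) + (G/2)(I₁/J − 2) with K, G > 0 satisfies Ψ_el ≥ 0 for all admissible (a, A) symmetric positive definite 2×2 matrices (where J = sqrt(det a / det A), I₁ = tr(A⁻¹ a)), with equality if and only if a = A. -/

import Mathlib

/-!
With `M = A⁻¹ a` we have `J² = det M` and `I₁ = tr M = tr (adj A · a) / det A`. For symmetric
2×2 matrices with `A` positive definite, `tr (adj A · a)² ≥ 4 det A det a` (after multiplying by
`A₀₀ A₁₁` it is an explicit sum of squares), so `I₁ ≥ 2J`; with `log J² ≤ J² - 1` both terms of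
`Ψ_el` are nonnegative. If `Ψ_el = 0` then `J = 1` and `I₁ = 2`. For `D = a - A` this means
`tr (adj A · D) = 0`, and then `det (A + D) = det A + tr (adj A · D) + det D` gives `det D = 0`;
for symmetric `D` of rank at most one the first condition is the quadratic form of `A` at a vector
spanning the kernel of `D`, so `D = 0`.
-/

open Matrix

namespace Matrix

lemma PosDef.isSymm {R : Type*} [Ring R] [PartialOrder R] [StarRing R] [TrivialStar R]
    {n : Type*} {A : Matrix n n R} (hA : A.PosDef) : A.IsSymm :=
  isHermitian_iff_isSymm.mp hA.isHermitian

variable {n : Type*} [Fintype n] [DecidableEq n]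

lemma trace_inv_mul {K : Type*} [Field K] (A B : Matrix n n K) :
    (A⁻¹ * B).trace = A.det⁻¹ * (A.adjugate * B).trace := by
  rw [inv_def, Ring.inverse_eq_inv, smul_mul_assoc, trace_smul, smul_eq_mul]

lemma trace_adjugate_mul_self {R : Type*} [CommRing R] (A : Matrix n n R) :
    (A.adjugate * A).trace = Fintype.card n * A.det := by
  rw [adjugate_mul, trace_smul, trace_one, smul_eq_mul, mul_comm]

section FinTwo

lemma IsSymm.exists_eq_fin_two {α : Type*} {M : Matrix (Fin 2) (Fin 2) α} (hM : M.IsSymm) :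
    ∃ p q r, M = !![p, q; q, r] :=
  ⟨M 0 0, M 0 1, M 1 1, (eta_fin_two M).trans (by rw [hM.apply 0 1])⟩

lemma det_add_fin_two {R : Type*} [CommRing R] (A B : Matrix (Fin 2) (Fin 2) R) :
    (A + B).det = A.det + (A.adjugate * B).trace + B.det := by
  simp only [det_fin_two, adjugate_fin_two, trace_fin_two, add_apply, mul_apply, Fin.sum_univ_two,
    of_apply, cons_val', cons_val_zero, cons_val_one, empty_val', cons_val_fin_one]
  ring

lemma trace_adjugate_mul_fin_two_of {R : Type*} [CommRing R] (P Q S p q r : R) :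
    (!![P, Q; Q, S].adjugate * !![p, q; q, r]).trace = S * p - 2 * Q * q + P * r := by
  rw [adjugate_fin_two_of, mul_fin_two, trace_fin_two_of]
  ring

variable {A B : Matrix (Fin 2) (Fin 2) ℝ}

lemma PosDef.exists_eq_fin_two (hA : A.PosDef) :
    ∃ p q r, A = !![p, q; q, r] ∧ 0 < p ∧ 0 < p * r - q * q := by
  obtain ⟨p, q, r, rfl⟩ := hA.isSymm.exists_eq_fin_two
  exact ⟨p, q, r, rfl, by simpa using hA.diag_pos (i := 0),
    by simpa [det_fin_two_of] using hA.det_pos⟩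

lemma PosDef.four_mul_det_mul_det_le_sq_trace_adjugate_mul (hA : A.PosDef) (hB : B.IsSymm) :
    4 * A.det * B.det ≤ (A.adjugate * B).trace ^ 2 := by
  obtain ⟨P, Q, R, rfl, hP, hE⟩ := hA.exists_eq_fin_two
  obtain ⟨p, q, r, rfl⟩ := hB.exists_eq_fin_two
  rw [trace_adjugate_mul_fin_two_of, det_fin_two_of, det_fin_two_of]
  have hPR : 0 < P * R := by nlinarith [mul_self_nonneg Q]
  have hsos : P * R * ((R * p - 2 * Q * q + P * r) ^ 2 - 4 * (P * R - Q * Q) * (p * r - q * q)) =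
      (P * R - Q * Q) * (r * P - p * R) ^ 2 + (P * (Q * r - q * R) + R * (Q * p - q * P)) ^ 2 := by
    ring
  have hprod :
      0 ≤ P * R * ((R * p - 2 * Q * q + P * r) ^ 2 - 4 * (P * R - Q * Q) * (p * r - q * q)) :=
    hsos ▸ by positivity
  exact sub_nonneg.mp (nonneg_of_mul_nonneg_right hprod hPR)

lemma PosDef.trace_adjugate_mul_pos (hA : A.PosDef) (hB : B.PosDef) :
    0 < (A.adjugate * B).trace := by
  obtain ⟨P, Q, R, rfl, hP, hE⟩ := hA.exists_eq_fin_two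
  obtain ⟨p, q, r, rfl, hp, he⟩ := hB.exists_eq_fin_two
  rw [trace_adjugate_mul_fin_two_of]
  have hR : 0 < R := by nlinarith [mul_self_nonneg Q]
  have hr : 0 < r := by nlinarith [mul_self_nonneg q]
  have hQq : (Q * q) * (Q * q) < (P * R) * (p * r) := by
    rw [mul_mul_mul_comm]
    exact mul_lt_mul'' (by linarith) (by linarith) (mul_self_nonneg Q) (mul_self_nonneg q)
  nlinarith [sq_nonneg (R * p - P * r), mul_pos hP hr, mul_pos hR hp]

lemma PosDef.eq_zero_of_det_eq_zero_of_trace_adjugate_mul_eq_zero (hA : A.PosDef) (hB : B.IsSymm)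
    (hdet : B.det = 0) (htr : (A.adjugate * B).trace = 0) : B = 0 := by
  obtain ⟨P, Q, R, rfl, hP, hE⟩ := hA.exists_eq_fin_two
  obtain ⟨x, y, z, rfl⟩ := hB.exists_eq_fin_two
  rw [trace_adjugate_mul_fin_two_of] at htr
  rw [det_fin_two_of] at hdet
  -- `P` times the quadratic form of `A` at `(y, -x)`
  have hform : (P * y - Q * x) ^ 2 + (P * R - Q * Q) * x ^ 2 = 0 := by
    linear_combination P * x * htr - P * P * hdet
  obtain ⟨hy', hx'⟩ := (add_eq_zero_iff_of_nonneg (sq_nonneg _) (by positivity)).mp hform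
  have hx : x = 0 := pow_eq_zero_iff two_ne_zero |>.mp ((mul_eq_zero.mp hx').resolve_left hE.ne')
  subst hx
  have hy : y = 0 := by simpa [hP.ne'] using hy'
  subst hy
  have hz : z = 0 := by simpa [hP.ne'] using htr
  subst hz
  exact (eta_fin_two 0).symm

lemma PosDef.two_mul_sqrt_det_div_det_le_trace_inv_mul (hB : B.PosDef) (hA : A.PosDef) :
    2 * √(B.det / A.det) ≤ (A⁻¹ * B).trace := by
  have hdetA := hA.det_pos
  have htr := hA.trace_adjugate_mul_pos hB
  rw [trace_inv_mul, ← le_div_iff₀' two_pos, Real.sqrt_le_left (by positivity), div_le_iff₀ hdetA]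
  field_simp
  linarith [hA.four_mul_det_mul_det_le_sq_trace_adjugate_mul hB.isSymm]

lemma PosDef.eq_of_det_eq_of_trace_inv_mul_eq_two (hA : A.PosDef) (hB : B.IsSymm)
    (hdet : B.det = A.det) (htr : (A⁻¹ * B).trace = 2) : B = A := by
  have hdetA := hA.det_pos
  rw [trace_inv_mul, inv_mul_eq_iff_eq_mul₀ hdetA.ne'] at htr
  have hmixed : (A.adjugate * (B - A)).trace = 0 := by
    rw [mul_sub, trace_sub, trace_adjugate_mul_self, htr]
    norm_num [mul_comm]
  have hdet' : (B - A).det = 0 := by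
    have := det_add_fin_two A (B - A)
    rw [add_sub_cancel, hdet, hmixed] at this
    linarith
  exact sub_eq_zero.mp <| hA.eq_zero_of_det_eq_zero_of_trace_adjugate_mul_eq_zero
    (hB.sub hA.isSymm) hdet' hmixed

end FinTwo

end Matrix

open Real

section ElasticEnergy

variable {K G J I₁ : ℝ}

lemma sq_sub_one_sub_two_mul_log_nonneg (hJ : 0 < J) : 0 ≤ J ^ 2 - 1 - 2 * log J := by
  have := log_le_sub_one_of_pos (pow_pos hJ 2)
  rw [log_pow] at this
  push_cast at this
  linarith

lemma sq_sub_one_sub_two_mul_log_eq_zero_iff (hJ : 0 < J) :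
    J ^ 2 - 1 - 2 * log J = 0 ↔ J = 1 := by
  refine ⟨fun h ↦ ?_, by rintro rfl; simp⟩
  by_contra hJ1
  have := log_lt_sub_one_of_pos (pow_pos hJ 2)
    ((pow_eq_one_iff_of_nonneg hJ.le two_ne_zero).not.mpr hJ1)
  rw [log_pow] at this
  push_cast at this
  linarith

noncomputable def elasticEnergy (K G J I₁ : ℝ) : ℝ :=
  (K / 4) * (J ^ 2 - 1 - 2 * log J) + (G / 2) * (I₁ / J - 2)

lemma elasticEnergy_nonneg (hK : 0 ≤ K) (hG : 0 ≤ G) (hJ : 0 < J) (hI : 2 * J ≤ I₁) :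
    0 ≤ elasticEnergy K G J I₁ := by
  have hvol := sq_sub_one_sub_two_mul_log_nonneg hJ
  have hshear : 0 ≤ I₁ / J - 2 := by rw [sub_nonneg, le_div_iff₀ hJ]; linarith
  unfold elasticEnergy
  positivity

lemma elasticEnergy_eq_zero_iff (hK : 0 < K) (hG : 0 < G) (hJ : 0 < J) (hI : 2 * J ≤ I₁) :
    elasticEnergy K G J I₁ = 0 ↔ J = 1 ∧ I₁ = 2 := by
  have hvol := sq_sub_one_sub_two_mul_log_nonneg hJ
  have hshear : 0 ≤ I₁ / J - 2 := by rw [sub_nonneg, le_div_iff₀ hJ]; linarith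
  unfold elasticEnergy
  rw [add_eq_zero_iff_of_nonneg (by positivity) (by positivity), mul_eq_zero, mul_eq_zero,
    or_iff_right (by positivity), or_iff_right (by positivity),
    sq_sub_one_sub_two_mul_log_eq_zero_iff hJ]
  refine and_congr_right fun hJ1 ↦ ?_
  rw [hJ1, div_one, sub_eq_zero]

end ElasticEnergy

/-- The elastic energy `Ψ_el = (K/4)(J² − 1 − 2 ln J) + (G/2)(I₁/J − 2)` with `K, G > 0`,
`J = √(det a / det A)` and `I₁ = tr(A⁻¹ a)`, is nonnegative for all symmetric positive
definite 2×2 matrices `a`, `A`, with equality if and only if `a = A`. -/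
theorem stmt18 (K G : ℝ) (hK : 0 < K) (hG : 0 < G)
    (a A : Matrix (Fin 2) (Fin 2) ℝ) (ha : a.PosDef) (hA : A.PosDef)
    (J I₁ Ψel : ℝ)
    (hJ : J = Real.sqrt (a.det / A.det)) (hI : I₁ = (A⁻¹ * a).trace)
    (hΨ : Ψel = (K/4) * (J^2 - 1 - 2 * Real.log J) + (G/2) * (I₁ / J - 2)) :
    0 ≤ Ψel ∧ (Ψel = 0 ↔ a = A) := by
  have hJpos : 0 < J := hJ ▸ Real.sqrt_pos.2 (div_pos ha.det_pos hA.det_pos)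
  have hJI : 2 * J ≤ I₁ := hJ ▸ hI ▸ ha.two_mul_sqrt_det_div_det_le_trace_inv_mul hA
  have hJ1 : J = 1 ↔ a.det = A.det := by
    rw [hJ, Real.sqrt_eq_one, div_eq_one_iff_eq hA.det_pos.ne']
  change Ψel = elasticEnergy K G J I₁ at hΨ
  rw [hΨ]
  refine ⟨elasticEnergy_nonneg hK.le hG.le hJpos hJI, ?_⟩
  rw [elasticEnergy_eq_zero_iff hK hG hJpos hJI, hJ1, hI]
  refine ⟨fun ⟨hdet, htr⟩ ↦ ?_, ?_⟩
  · exact hA.eq_of_det_eq_of_trace_inv_mul_eq_two ha.isSymm hdet htr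
  · rintro rfl
    simp [nonsing_inv_mul _ (isUnit_iff_ne_zero.mpr hA.det_pos.ne')]
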